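/- Fix σ_a, σ_w > 0 and r₀ > 0, and let T := τ(r₀) where τ(x) = σ_a²(F(x)−F(0))/(σ_w² G(x)), F(x) = 4·arctan(√(1+2x)) − √(1+2x)(3+4x)/(1+x)², G(x) = x²(1+2x)^{3/2}/(1+x)². Define r(t) := F⁻¹(F(r₀) − (σ_w²/σ_a²)·G(r₀)·t) and Σ₁(t) := σ_a²·G(r(t))/G(r₀) for t ∈ [0,T]. Then r and Σ₁ are C¹ on [0,T], satisfy r(0) = r₀, Σ₁(0) = σ_a², r(T) = 0, Σ₁(T) = 0, r(t) > 0 and Σ₁(t) > 0 for t ∈ [0,T), and on [0,T) they solve the coupled ODEs r'(t) = −σ_w²·r(t)²·(1+r(t))·(1+2r(t)) / ((1+3r(t))·Σ₁(t)) and Σ₁'(t) = −σ_w²·(r(t)² + 2r(t)). -/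

import Mathlib

/-! By definition `F (r t) = F r₀ - c t` with `c = (σw² / σa²) G r₀`, so `r` is `F⁻¹` composed
with an affine map decreasing from `F r₀` to `F 0 = π - 3` on `[0, T]`. Since
`F' x = √(1 + 2x) (1 + 3x) / (1 + x)³ > 0`, the inverse is `C¹` with `r' = -c / F' r`: continuity of
`F⁻¹` follows from compactness of `[0, R]`, and at `F 0`, the end of the range on which `F⁻¹` is
known, only one-sided derivatives are available. Both ODEs then reduce to the identities
`G' = (x² + 2x) F'` and `G (1 + 3x) = F' x² (1 + x) (1 + 2x)`. -/

open Real Set Filter Topology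

noncomputable def F (x : ℝ) : ℝ :=
  4 * Real.arctan (Real.sqrt (1 + 2 * x)) -
    Real.sqrt (1 + 2 * x) * (3 + 4 * x) / (1 + x) ^ 2

noncomputable def G (x : ℝ) : ℝ := x ^ 2 * (1 + 2 * x) ^ ((3 : ℝ) / 2) / (1 + x) ^ 2

noncomputable def tau (σa σw x : ℝ) : ℝ := σa ^ 2 * (F x - F 0) / (σw ^ 2 * G x)

theorem continuousOn_of_leftInvOn_of_isCompact {X Y : Type*} [TopologicalSpace X]
    [TopologicalSpace Y] [T2Space Y] {f : X → Y} {g : Y → X} {K : Set X} {s : Set Y}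
    (hK : IsCompact K) (hf : ContinuousOn f K) (hgf : LeftInvOn g f K) (hfg : LeftInvOn f g s)
    (hg : MapsTo g s K) : ContinuousOn g s := by
  refine continuousOn_iff_isClosed.2 fun C hC => ⟨f '' (C ∩ K),
    ((hK.inter_left hC).image_of_continuousOn (hf.mono inter_subset_right)).isClosed, ?_⟩
  ext y
  constructor
  · rintro ⟨hyC, hys⟩
    exact ⟨⟨g y, ⟨hyC, hg hys⟩, hfg hys⟩, hys⟩
  · rintro ⟨⟨x, ⟨hxC, hxK⟩, rfl⟩, hys⟩
    exact ⟨by rwa [mem_preimage, hgf hxK], hys⟩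

theorem HasDerivWithinAt.of_local_left_inverse {𝕜 : Type*} [NontriviallyNormedField 𝕜]
    {f g : 𝕜 → 𝕜} {f' a : 𝕜} {s : Set 𝕜} (hg : ContinuousWithinAt g s a)
    (hf : HasDerivAt f f' (g a)) (hf' : f' ≠ 0) (ha : a ∈ s)
    (hfg : ∀ᶠ y in 𝓝[s] a, f (g y) = y) : HasDerivWithinAt g f'⁻¹ s a := by
  have hf := (hf.hasFDerivAt_equiv hf').hasFDerivWithinAt (s := univ)
  simpa using (hf.of_local_left_inverse (by simpa using hg.tendsto) ha hfg).hasDerivWithinAt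

theorem contDiffOn_one_of_hasDerivWithinAt {𝕜 E : Type*} [NontriviallyNormedField 𝕜]
    [NormedAddCommGroup E] [NormedSpace 𝕜 E] {f f' : 𝕜 → E} {s : Set 𝕜} (hs : UniqueDiffOn 𝕜 s)
    (hf : ∀ x ∈ s, HasDerivWithinAt f (f' x) s x) (hf' : ContinuousOn f' s) :
    ContDiffOn 𝕜 1 f s :=
  (contDiffOn_one_iff_derivWithin hs).2 ⟨fun x hx => (hf x hx).differentiableWithinAt,
    hf'.congr fun x hx => (hf x hx).derivWithin (hs x hx)⟩

noncomputable def F' (x : ℝ) : ℝ := √(1 + 2 * x) * (1 + 3 * x) / (1 + x) ^ 3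

lemma hasDerivAt_sqrt_one_add_two_mul {x : ℝ} (hx : -1 / 2 < x) :
    HasDerivAt (fun x => √(1 + 2 * x)) (1 / √(1 + 2 * x)) x := by
  have h2x : 0 < 1 + 2 * x := by linarith
  refine (((hasDerivAt_id' (x := x)).const_mul 2).const_add 1).sqrt h2x.ne' |>.congr_deriv ?_
  field_simp [(sqrt_pos.2 h2x).ne']

/- The derivative identities below become identities of rational functions of `s = √(1 + 2x)`
after the substitution `x = (s² - 1) / 2`. -/
lemma hasDerivAt_F {x : ℝ} (hx : -1 / 2 < x) : HasDerivAt F (F' x) x := by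
  have h1x : 1 + x ≠ 0 := by linarith
  have hsqrt := hasDerivAt_sqrt_one_add_two_mul hx
  refine ((((hasDerivAt_arctan _).comp x hsqrt).const_mul 4).sub
    ((hsqrt.fun_mul (((hasDerivAt_id' (x := x)).const_mul 4).const_add 3)).div
      (((hasDerivAt_id' (x := x)).const_add 1).fun_pow 2) (pow_ne_zero 2 h1x))).congr_deriv ?_
  have hss : √(1 + 2 * x) ^ 2 = 1 + 2 * x := sq_sqrt (by linarith)
  have hs : 0 < √(1 + 2 * x) := sqrt_pos.2 (by linarith)
  rw [F']
  generalize √(1 + 2 * x) = s at *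
  obtain rfl : x = (s ^ 2 - 1) / 2 := by linarith
  rw [show 1 + (s ^ 2 - 1) / 2 = (1 + s ^ 2) / 2 by ring]
  field_simp
  ring

lemma G_eq_mul_sqrt {x : ℝ} (hx : -1 / 2 < x) :
    G x = x ^ 2 * (1 + 2 * x) * √(1 + 2 * x) / (1 + x) ^ 2 := by
  rw [G, show (3 : ℝ) / 2 = 1 + 1 / 2 by norm_num, rpow_add (by linarith), rpow_one,
    sqrt_eq_rpow, mul_assoc (x ^ 2)]

lemma hasDerivAt_G {x : ℝ} (hx : -1 / 2 < x) : HasDerivAt G ((x ^ 2 + 2 * x) * F' x) x := by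
  have h1x : 1 + x ≠ 0 := by linarith
  have hG : G =ᶠ[𝓝 x] fun x => x ^ 2 * (1 + 2 * x) * √(1 + 2 * x) / (1 + x) ^ 2 :=
    eventually_of_mem (Ioi_mem_nhds hx) fun y hy => G_eq_mul_sqrt hy
  refine (((((hasDerivAt_id' (x := x)).fun_pow 2).fun_mul
    (((hasDerivAt_id' (x := x)).const_mul 2).const_add 1)).fun_mul
      (hasDerivAt_sqrt_one_add_two_mul hx)).div (((hasDerivAt_id' (x := x)).const_add 1).fun_pow 2)
        (pow_ne_zero 2 h1x)).congr_of_eventuallyEq hG |>.congr_deriv ?_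
  have hss : √(1 + 2 * x) ^ 2 = 1 + 2 * x := sq_sqrt (by linarith)
  have hs : 0 < √(1 + 2 * x) := sqrt_pos.2 (by linarith)
  rw [F']
  generalize √(1 + 2 * x) = s at *
  obtain rfl : x = (s ^ 2 - 1) / 2 := by linarith
  rw [show 1 + (s ^ 2 - 1) / 2 = (1 + s ^ 2) / 2 by ring]
  field_simp
  ring

lemma G_mul_one_add_three_mul {x : ℝ} (hx : -1 / 2 < x) :
    G x * (1 + 3 * x) = F' x * (x ^ 2 * (1 + x) * (1 + 2 * x)) := by
  have h1x : 1 + x ≠ 0 := by linarith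
  rw [G_eq_mul_sqrt hx, F']
  field_simp

lemma F_zero : F 0 = π - 3 := by
  norm_num [F, arctan_one]
  ring

lemma F_lt_two_pi {x : ℝ} (hx : -1 / 2 < x) : F x < 2 * π := by
  have hterm : 0 ≤ √(1 + 2 * x) * (3 + 4 * x) / (1 + x) ^ 2 :=
    div_nonneg (mul_nonneg (sqrt_nonneg _) (by linarith)) (sq_nonneg _)
  have := arctan_lt_pi_div_two √(1 + 2 * x)
  rw [F]
  linarith

lemma F'_pos {x : ℝ} (hx : -1 / 3 < x) : 0 < F' x := by
  have : 0 < √(1 + 2 * x) := sqrt_pos.2 (by linarith)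
  have : 0 < 1 + 3 * x := by linarith
  have : 0 < 1 + x := by linarith
  rw [F']
  positivity

lemma continuousOn_F' : ContinuousOn F' (Ioi (-1 / 2)) := by
  refine ContinuousOn.div (by fun_prop) (by fun_prop) fun x hx => ?_
  have : 0 < 1 + x := by linarith [mem_Ioi.1 hx]
  positivity

lemma strictMonoOn_F : StrictMonoOn F (Ici 0) := by
  refine strictMonoOn_of_deriv_pos (convex_Ici 0)
    (fun x hx => (hasDerivAt_F (by linarith [mem_Ici.1 hx])).continuousAt.continuousWithinAt)
    fun x hx => ?_
  rw [interior_Ici, mem_Ioi] at hx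
  rw [(hasDerivAt_F (by linarith)).deriv]
  exact F'_pos (by linarith)

lemma G_pos {x : ℝ} (hx : 0 < x) : 0 < G x := by
  have := rpow_pos_of_pos (by linarith : (0 : ℝ) < 1 + 2 * x) ((3 : ℝ) / 2)
  rw [G]
  positivity

lemma inv_F'_eq {x : ℝ} (hx : 0 < x) :
    (F' x)⁻¹ = x ^ 2 * (1 + x) * (1 + 2 * x) / (G x * (1 + 3 * x)) := by
  rw [eq_div_iff (by have := G_pos hx; positivity), G_mul_one_add_three_mul (by linarith),
    inv_mul_cancel_left₀ (F'_pos (by linarith)).ne']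

lemma contDiffOn_G : ContDiffOn ℝ 1 G (Ioi (-1 / 2)) :=
  contDiffOn_one_of_hasDerivWithinAt isOpen_Ioi.uniqueDiffOn
    (fun _ hx => (hasDerivAt_G hx).hasDerivWithinAt)
    ((continuousOn_id.pow 2).add (continuousOn_const.mul continuousOn_id) |>.mul continuousOn_F')

section Inverse

variable {Finv : ℝ → ℝ} {R : ℝ}

lemma mapsTo_Finv (hleft : LeftInvOn Finv F (Ici 0)) (hR : 0 ≤ R) :
    MapsTo Finv (Icc (F 0) (F R)) (Icc 0 R) := by
  intro y hy
  obtain ⟨x, hx, rfl⟩ := intermediate_value_Icc hR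
    (fun x hx => (hasDerivAt_F (by linarith [hx.1])).continuousAt.continuousWithinAt) hy
  rwa [hleft hx.1]

lemma leftInvOn_F_Finv (hright : LeftInvOn F Finv (Ico (π - 3) (2 * π))) (hR : 0 ≤ R) :
    LeftInvOn F Finv (Icc (F 0) (F R)) := fun y hy =>
  hright ⟨F_zero ▸ hy.1, hy.2.trans_lt (F_lt_two_pi (by linarith))⟩

lemma continuousOn_Finv (hleft : LeftInvOn Finv F (Ici 0))
    (hright : LeftInvOn F Finv (Ico (π - 3) (2 * π))) (hR : 0 ≤ R) :
    ContinuousOn Finv (Icc (F 0) (F R)) :=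
  continuousOn_of_leftInvOn_of_isCompact isCompact_Icc
    (fun x hx => (hasDerivAt_F (by linarith [hx.1])).continuousAt.continuousWithinAt)
    (hleft.mono Icc_subset_Ici_self) (leftInvOn_F_Finv hright hR) (mapsTo_Finv hleft hR)

lemma hasDerivWithinAt_Finv (hleft : LeftInvOn Finv F (Ici 0))
    (hright : LeftInvOn F Finv (Ico (π - 3) (2 * π))) (hR : 0 ≤ R) {y : ℝ}
    (hy : y ∈ Icc (F 0) (F R)) :
    HasDerivWithinAt Finv (F' (Finv y))⁻¹ (Icc (F 0) (F R)) y := by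
  have hx := (mapsTo_Finv hleft hR hy).1
  exact HasDerivWithinAt.of_local_left_inverse (continuousOn_Finv hleft hright hR y hy)
    (hasDerivAt_F (by linarith)) (F'_pos (by linarith)).ne' hy
    (eventually_mem_nhdsWithin.mono (leftInvOn_F_Finv hright hR))

lemma contDiffOn_Finv (hleft : LeftInvOn Finv F (Ici 0))
    (hright : LeftInvOn F Finv (Ico (π - 3) (2 * π))) (hR : 0 < R) :
    ContDiffOn ℝ 1 Finv (Icc (F 0) (F R)) := by
  have hx : ∀ y ∈ Icc (F 0) (F R), 0 ≤ Finv y := fun y hy => (mapsTo_Finv hleft hR.le hy).1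
  refine contDiffOn_one_of_hasDerivWithinAt
    (uniqueDiffOn_Icc (strictMonoOn_F self_mem_Ici hR.le hR))
    (fun y hy => hasDerivWithinAt_Finv hleft hright hR.le hy)
    ((continuousOn_F'.comp (continuousOn_Finv hleft hright hR.le) fun y hy => ?_).inv₀
      fun y hy => (F'_pos ?_).ne')
  · exact show -1 / 2 < Finv y by linarith [hx y hy]
  · linarith [hx y hy]

lemma Finv_pos (hleft : LeftInvOn Finv F (Ici 0))
    (hright : LeftInvOn F Finv (Ico (π - 3) (2 * π))) (hR : 0 ≤ R) {y : ℝ}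
    (hy : y ∈ Ioc (F 0) (F R)) : 0 < Finv y := by
  refine (mapsTo_Finv hleft hR (Ioc_subset_Icc_self hy)).1.lt_of_ne fun h => hy.1.ne' ?_
  rw [← leftInvOn_F_Finv hright hR (Ioc_subset_Icc_self hy), ← h]

section Trajectory

variable {Finv : ℝ → ℝ} {r₀ c T t : ℝ}

lemma F_sub_mul_mem_Icc (hc : 0 ≤ c) (hcT : c * T = F r₀ - F 0) (ht : t ∈ Icc 0 T) :
    F r₀ - c * t ∈ Icc (F 0) (F r₀) :=
  ⟨by nlinarith [ht.2], by nlinarith [ht.1]⟩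

lemma F_sub_mul_mem_Ioc (hc : 0 < c) (hcT : c * T = F r₀ - F 0) (ht : t ∈ Ico 0 T) :
    F r₀ - c * t ∈ Ioc (F 0) (F r₀) :=
  ⟨by nlinarith [ht.2], by nlinarith [ht.1]⟩

lemma contDiffOn_Finv_F_sub_mul (hleft : LeftInvOn Finv F (Ici 0))
    (hright : LeftInvOn F Finv (Ico (π - 3) (2 * π))) (hr₀ : 0 < r₀) (hc : 0 ≤ c)
    (hcT : c * T = F r₀ - F 0) : ContDiffOn ℝ 1 (fun t => Finv (F r₀ - c * t)) (Icc 0 T) :=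
  (contDiffOn_Finv hleft hright hr₀).comp (by fun_prop) fun _ ht => F_sub_mul_mem_Icc hc hcT ht

lemma hasDerivAt_Finv_F_sub_mul (hleft : LeftInvOn Finv F (Ici 0))
    (hright : LeftInvOn F Finv (Ico (π - 3) (2 * π))) (hr₀ : 0 ≤ r₀) (hc : 0 < c)
    (hcT : c * T = F r₀ - F 0) (ht : t ∈ Ico 0 T) :
    HasDerivAt (fun t => Finv (F r₀ - c * t)) ((F' (Finv (F r₀ - c * t)))⁻¹ * -c) t := by
  have hy := F_sub_mul_mem_Ioc hc hcT ht
  have hFR : F r₀ < F (r₀ + 1) := strictMonoOn_F hr₀ (by simp; linarith) (by linarith)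
  have hFinv := (hasDerivWithinAt_Finv hleft hright (by linarith) ⟨hy.1.le, hy.2.trans hFR.le⟩
    ).hasDerivAt (Icc_mem_nhds hy.1 (hy.2.trans_lt hFR))
  exact hFinv.comp t (((hasDerivAt_id t).const_mul c).const_sub _ |>.congr_deriv (by simp))

end Trajectory

theorem stmt_4 (σa σw r₀ : ℝ) (hσa : 0 < σa) (hσw : 0 < σw) (hr₀ : 0 < r₀)
    (T : ℝ) (hT : T = tau σa σw r₀)
    (Finv : ℝ → ℝ)
    (hFinv_left : ∀ x ∈ Set.Ici (0 : ℝ), Finv (F x) = x)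
    (hFinv_right : ∀ y ∈ Set.Ico (Real.pi - 3) (2 * Real.pi), F (Finv y) = y)
    (r S1 : ℝ → ℝ)
    (hr : ∀ t, r t = Finv (F r₀ - σw ^ 2 / σa ^ 2 * G r₀ * t))
    (hS1 : ∀ t, S1 t = σa ^ 2 * G (r t) / G r₀) :
    ContDiffOn ℝ 1 r (Set.Icc 0 T) ∧ ContDiffOn ℝ 1 S1 (Set.Icc 0 T) ∧
      r 0 = r₀ ∧ S1 0 = σa ^ 2 ∧ r T = 0 ∧ S1 T = 0 ∧
      (∀ t ∈ Set.Ico 0 T, 0 < r t ∧ 0 < S1 t) ∧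
      (∀ t ∈ Set.Ico 0 T,
        HasDerivAt r
          (-(σw ^ 2 * r t ^ 2 * (1 + r t) * (1 + 2 * r t) / ((1 + 3 * r t) * S1 t))) t ∧
        HasDerivAt S1 (-(σw ^ 2 * (r t ^ 2 + 2 * r t))) t) := by
  have hG₀ : 0 < G r₀ := G_pos hr₀
  set c := σw ^ 2 / σa ^ 2 * G r₀ with hc_def
  have hc : 0 < c := by positivity
  have hcT : c * T = F r₀ - F 0 := by rw [hT, tau, hc_def]; field_simp
  have hr_eq : r = fun t => Finv (F r₀ - c * t) := funext hr
  have hS1_eq : S1 = (fun x => σa ^ 2 * G x / G r₀) ∘ r := funext hS1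
  have hr_nonneg : ∀ t ∈ Icc 0 T, 0 ≤ r t := fun t ht =>
    hr t ▸ (mapsTo_Finv hFinv_left hr₀.le (F_sub_mul_mem_Icc hc.le hcT ht)).1
  have hr_pos : ∀ t ∈ Ico 0 T, 0 < r t := fun t ht =>
    hr t ▸ Finv_pos hFinv_left hFinv_right hr₀.le (F_sub_mul_mem_Ioc hc hcT ht)
  have hr_C1 : ContDiffOn ℝ 1 r (Icc 0 T) :=
    hr_eq ▸ contDiffOn_Finv_F_sub_mul hFinv_left hFinv_right hr₀ hc.le hcT
  have hr_deriv : ∀ t ∈ Ico 0 T, HasDerivAt r ((F' (r t))⁻¹ * -c) t := fun t ht => by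
    rw [hr_eq]
    exact hasDerivAt_Finv_F_sub_mul hFinv_left hFinv_right hr₀.le hc hcT ht
  have hr_zero : r 0 = r₀ := by rw [hr, mul_zero, sub_zero, hFinv_left r₀ hr₀.le]
  have hr_T : r T = 0 := by rw [hr, hcT, sub_sub_cancel, hFinv_left 0 self_mem_Ici]
  refine ⟨hr_C1, ?_, hr_zero, ?_, hr_T, ?_, fun t ht => ⟨hr_pos t ht, ?_⟩, fun t ht => ⟨?_, ?_⟩⟩
  · rw [hS1_eq]
    exact ((contDiffOn_const.mul contDiffOn_G).div_const _).comp hr_C1 fun t ht =>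
      show -1 / 2 < r t by linarith [hr_nonneg t ht]
  · rw [hS1, hr_zero]
    field_simp
  · rw [hS1, hr_T]
    simp [G]
  · rw [hS1]
    have := G_pos (hr_pos t ht)
    positivity
  · convert hr_deriv t ht using 1
    rw [inv_F'_eq (hr_pos t ht), hS1, hc_def]
    field_simp
  · have hρ := hr_pos t ht
    have hG := ((hasDerivAt_G (x := r t) (by linarith)).const_mul (σa ^ 2)).div_const (G r₀)
    rw [hS1_eq]
    refine (hG.comp t (hr_deriv t ht)).congr_deriv ?_
    have := (F'_pos (x := r t) (by linarith)).ne'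
    rw [hc_def]
    field_simp
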